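/- Let Δ be a fan in a lattice N, L ⊆ N a primitive sublattice, and let P : (N,Δ) → (Ñ,Δ̃) be the projection defining the quotient fan Δ̃ of Δ by L, with maximal cones τ₁, …, τ_r of Δ̃. For each i set σᵢ := conv{ ρ ∈ Δ^(1) : P^ℝ(ρ) ⊆ τᵢ }, where Δ^(1) is the set of rays (one-dimensional cones) of Δ. Then σ₁, …, σ_r are the maximal cones of a quasifan in N; in particular, for any i, j the intersection σᵢ ∩ σⱼ is a face of σᵢ. -/

import Mathlib

open Set

/-- The coercion of an integral vector in `ℤ^n` to a real vector in `ℝ^n`. -/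
def toR {n : ℕ} (v : Fin n → ℤ) : Fin n → ℝ := fun i => (v i : ℝ)

/-- The scalar extension `F^ℝ : N^ℝ → N'^ℝ` of a `ℤ`-linear map `F : N → N'`,
where `N = ℤ^n`, `N' = ℤ^m`. -/
noncomputable def extR {n m : ℕ} (F : (Fin n → ℤ) →ₗ[ℤ] (Fin m → ℤ)) :
    (Fin n → ℝ) →ₗ[ℝ] (Fin m → ℝ) :=
  (Matrix.of fun i j => ((F (Pi.single j 1)) i : ℝ)).mulVecLin

/-- A convex cone: a subset containing `0` that is closed under addition and
under multiplication by nonnegative scalars. -/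
def IsCone {V : Type*} [AddCommGroup V] [Module ℝ V] (σ : Set V) : Prop :=
  0 ∈ σ ∧ (∀ x ∈ σ, ∀ y ∈ σ, x + y ∈ σ) ∧ ∀ c : ℝ, 0 ≤ c → ∀ x ∈ σ, c • x ∈ σ

/-- The convex-cone hull of a set: the smallest convex cone containing it. -/
def coneHull {V : Type*} [AddCommGroup V] [Module ℝ V] (s : Set V) : Set V :=
  ⋂₀ {σ | IsCone σ ∧ s ⊆ σ}

/-- A rational polyhedral cone in `ℝ^n`: a convex cone generated by finitely
many vectors of the lattice `ℤ^n`. -/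
def IsRatCone {n : ℕ} (σ : Set (Fin n → ℝ)) : Prop :=
  ∃ s : Finset (Fin n → ℤ), σ = coneHull (toR '' ↑s)

/-- A cone is strictly convex if it contains no nonzero linear subspace,
equivalently `σ ∩ (-σ) = {0}`. -/
def IsStrictlyConvexCone {V : Type*} [AddCommGroup V] [Module ℝ V] (σ : Set V) : Prop :=
  ∀ x ∈ σ, -x ∈ σ → x = 0

/-- `τ` is a face of the convex cone `σ`: a subcone such that whenever
`x, y ∈ σ` and `x + y ∈ τ`, then `x, y ∈ τ`. -/
def IsFaceOf {V : Type*} [AddCommGroup V] [Module ℝ V] (τ σ : Set V) : Prop :=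
  IsCone τ ∧ τ ⊆ σ ∧ ∀ x ∈ σ, ∀ y ∈ σ, x + y ∈ τ → x ∈ τ ∧ y ∈ τ

/-- A system of `N`-cones: a finite set of rational polyhedral cones in `ℝ^n`. -/
def IsConeSystem {n : ℕ} (S : Set (Set (Fin n → ℝ))) : Prop :=
  S.Finite ∧ ∀ σ ∈ S, IsRatCone σ

/-- A quasifan: a finite set of rational polyhedral cones, closed under taking
faces, in which any two cones intersect in a common face. -/
def IsQuasifan {n : ℕ} (Δ : Set (Set (Fin n → ℝ))) : Prop :=
  IsConeSystem Δ ∧ (∀ σ ∈ Δ, ∀ τ, IsFaceOf τ σ → τ ∈ Δ) ∧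
    ∀ σ ∈ Δ, ∀ σ' ∈ Δ, IsFaceOf (σ ∩ σ') σ

/-- A fan: a quasifan all of whose cones are strictly convex. -/
def IsFan {n : ℕ} (Δ : Set (Set (Fin n → ℝ))) : Prop :=
  IsQuasifan Δ ∧ ∀ σ ∈ Δ, IsStrictlyConvexCone σ

/-- `F` defines a map of systems of cones (in particular of (quasi-)fans):
every cone of `S` is mapped by `F^ℝ` into some cone of `S'`. -/
def IsConeMap {n m : ℕ} (F : (Fin n → ℤ) →ₗ[ℤ] (Fin m → ℤ))
    (S : Set (Set (Fin n → ℝ))) (S' : Set (Set (Fin m → ℝ))) : Prop :=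
  ∀ σ ∈ S, ∃ τ ∈ S', extR F '' σ ⊆ τ

/-- A sublattice `L ⊆ ℤ^n` is primitive if the quotient `ℤ^n/L` is
torsion-free. -/
def IsPrimitive {n : ℕ} (L : Submodule ℤ (Fin n → ℤ)) : Prop :=
  ∀ (v : Fin n → ℤ) (k : ℤ), k ≠ 0 → k • v ∈ L → v ∈ L

/-- The set of maximal cones of a system of cones. -/
def maxCones {n : ℕ} (Δ : Set (Set (Fin n → ℝ))) : Set (Set (Fin n → ℝ)) :=
  {σ ∈ Δ | ∀ τ ∈ Δ, σ ⊆ τ → σ = τ}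

/-- `ρ` is a ray (one-dimensional cone) of `Δ`. -/
def IsRay {n : ℕ} (Δ : Set (Set (Fin n → ℝ))) (ρ : Set (Fin n → ℝ)) : Prop :=
  ρ ∈ Δ ∧ Module.finrank ℝ (Submodule.span ℝ ρ) = 1

/-- `Δt`, together with the surjection `P : ℤ^n → ℤ^m` onto the quotient of
`ℤ^n` by the primitive sublattice `L̂ = ker P ⊇ L`, is the quotient fan of the
system of cones `S` by `L`: the projection `P` defines a map of systems of
cones from `S` to the fan `Δt` and every map of systems of cones `F` from `S`
to a fan with `F(L) = 0` factors through `P` via a map of fans. -/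
def IsQuotientFan {n m : ℕ} (S : Set (Set (Fin n → ℝ))) (L : Submodule ℤ (Fin n → ℤ))
    (P : (Fin n → ℤ) →ₗ[ℤ] (Fin m → ℤ)) (Δt : Set (Set (Fin m → ℝ))) : Prop :=
  Function.Surjective P ∧ L ≤ LinearMap.ker P ∧ IsPrimitive (LinearMap.ker P) ∧
  IsFan Δt ∧ IsConeMap P S Δt ∧
  ∀ (k : ℕ) (F : (Fin n → ℤ) →ₗ[ℤ] (Fin k → ℤ)) (Δ' : Set (Set (Fin k → ℝ))),
    IsFan Δ' → IsConeMap F S Δ' → L ≤ LinearMap.ker F →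
    ∃ Ft : (Fin m → ℤ) →ₗ[ℤ] (Fin k → ℤ), IsConeMap Ft Δt Δ' ∧ F = Ft.comp P

section ConeBasics

variable {V : Type*} [AddCommGroup V] [Module ℝ V]

lemma isCone_coneHull (s : Set V) : IsCone (coneHull s) := by
  refine ⟨fun σ hσ => hσ.1.1, fun x hx y hy σ hσ => hσ.1.2.1 _ (hx σ hσ) _ (hy σ hσ),
    fun c hc x hx σ hσ => hσ.1.2.2 c hc _ (hx σ hσ)⟩

lemma subset_coneHull (s : Set V) : s ⊆ coneHull s :=
  fun _ hx σ hσ => hσ.2 hx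

lemma coneHull_subset {s : Set V} {σ : Set V} (hσ : IsCone σ) (h : s ⊆ σ) :
    coneHull s ⊆ σ := fun _ hx => hx σ ⟨hσ, h⟩

lemma coneHull_mono {s t : Set V} (h : s ⊆ t) : coneHull s ⊆ coneHull t :=
  coneHull_subset (isCone_coneHull t) (h.trans (subset_coneHull t))

lemma coneHull_of_isCone {σ : Set V} (hσ : IsCone σ) : coneHull σ = σ :=
  le_antisymm (coneHull_subset hσ le_rfl) (subset_coneHull σ)

lemma zero_mem_coneHull (s : Set V) : (0 : V) ∈ coneHull s :=
  (isCone_coneHull s).1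

lemma IsCone.sum_mem {σ : Set V} (hσ : IsCone σ) {ι : Type*} (t : Finset ι) (f : ι → V)
    (h : ∀ i ∈ t, f i ∈ σ) : ∑ i ∈ t, f i ∈ σ := by
  classical
  induction t using Finset.induction_on with
  | empty => simpa using hσ.1
  | insert a t hnot ih =>
    rw [Finset.sum_insert hnot]
    exact hσ.2.1 _ (h a (Finset.mem_insert_self a t)) _
      (ih fun i hi => h i (Finset.mem_insert_of_mem hi))

/-- Membership in the cone hull: nonnegative combinations. -/
lemma mem_coneHull_iff {s : Set V} {x : V} :
    x ∈ coneHull s ↔ ∃ (t : Finset V) (c : V → ℝ), ↑t ⊆ s ∧ (∀ v ∈ t, 0 ≤ c v) ∧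
      x = ∑ v ∈ t, c v • v := by
  classical
  constructor
  · intro hx
    apply hx {y | ∃ (t : Finset V) (c : V → ℝ), ↑t ⊆ s ∧ (∀ v ∈ t, 0 ≤ c v) ∧
      y = ∑ v ∈ t, c v • v}
    constructor
    · refine ⟨⟨∅, fun _ => 0, by simp, by simp, by simp⟩, ?_, ?_⟩
      · rintro x ⟨t, c, hts, hc, rfl⟩ y ⟨t', c', hts', hc', rfl⟩
        refine ⟨t ∪ t', (fun v => (if v ∈ t then c v else 0) + (if v ∈ t' then c' v else 0)),
          by rw [Finset.coe_union]; exact Set.union_subset hts hts', ?_, ?_⟩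
        · intro v _
          dsimp only
          have h1 : (0:ℝ) ≤ (if v ∈ t then c v else 0) := by
            split_ifs with h; exacts [hc v h, le_rfl]
          have h2 : (0:ℝ) ≤ (if v ∈ t' then c' v else 0) := by
            split_ifs with h; exacts [hc' v h, le_rfl]
          linarith
        · rw [Finset.sum_congr rfl (fun v _ => add_smul _ _ v), Finset.sum_add_distrib]
          congr 1
          · rw [← Finset.sum_subset (Finset.subset_union_left (s₂ := t'))]
            · exact Finset.sum_congr rfl fun v hv => by simp [hv]
            · intro v _ hv; simp [hv]
          · rw [← Finset.sum_subset (Finset.subset_union_right (s₁ := t))]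
            · exact Finset.sum_congr rfl fun v hv => by simp [hv]
            · intro v _ hv; simp [hv]
      · rintro a ha y ⟨t, c, hts, hc, rfl⟩
        refine ⟨t, fun v => a * c v, hts, fun v hv => mul_nonneg ha (hc v hv), ?_⟩
        rw [Finset.smul_sum]
        exact Finset.sum_congr rfl fun v _ => by rw [smul_smul]
    · intro v hv
      exact ⟨{v}, fun _ => 1, by simpa, by simp, by simp⟩
  · rintro ⟨t, c, hts, hc, rfl⟩
    exact (isCone_coneHull s).sum_mem t _ fun v hv =>
      (isCone_coneHull s).2.2 _ (hc v hv) _ (subset_coneHull s (hts hv))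

/-- Membership in the cone hull of a finite set, with coefficients indexed by the finset. -/
lemma mem_coneHull_finset_iff {t : Finset V} {x : V} :
    x ∈ coneHull (↑t : Set V) ↔ ∃ c : V → ℝ, (∀ v ∈ t, 0 ≤ c v) ∧
      x = ∑ v ∈ t, c v • v := by
  classical
  rw [mem_coneHull_iff]
  constructor
  · rintro ⟨t', c, hts, hc, rfl⟩
    have ht' : t' ⊆ t := fun v hv => by exact_mod_cast hts hv
    refine ⟨fun v => if v ∈ t' then c v else 0, fun v _ => ?_, ?_⟩
    · dsimp only; split_ifs with h; exacts [hc v h, le_rfl]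
    · rw [← Finset.sum_subset ht']
      · exact Finset.sum_congr rfl fun v hv => by simp [hv]
      · intro v _ hv; simp [hv]
  · rintro ⟨c, hc, rfl⟩
    exact ⟨t, c, le_rfl, hc, rfl⟩

lemma image_coneHull_subset {W : Type*} [AddCommGroup W] [Module ℝ W]
    (f : V →ₗ[ℝ] W) (s : Set V) : f '' coneHull s ⊆ coneHull (f '' s) := by
  rintro _ ⟨x, hx, rfl⟩
  have : coneHull s ⊆ f ⁻¹' coneHull (f '' s) := by
    refine coneHull_subset ⟨?_, ?_, ?_⟩ ?_
    · simp only [Set.mem_preimage, map_zero]; exact zero_mem_coneHull _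
    · intro a ha b hb
      simp only [Set.mem_preimage, map_add] at *
      exact (isCone_coneHull _).2.1 _ ha _ hb
    · intro c hc a ha
      simp only [Set.mem_preimage, map_smul] at *
      exact (isCone_coneHull _).2.2 c hc _ ha
    · intro a ha
      exact subset_coneHull _ ⟨a, ha, rfl⟩
  exact this hx

lemma nonneg_on_coneHull {s : Set V} (u : V →ₗ[ℝ] ℝ) (h : ∀ x ∈ s, 0 ≤ u x) :
    ∀ x ∈ coneHull s, 0 ≤ u x := by
  intro x hx
  have : coneHull s ⊆ {y | 0 ≤ u y} := by
    refine coneHull_subset ⟨by simp, ?_, ?_⟩ h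
    · intro a ha b hb; simp only [Set.mem_setOf_eq, map_add] at *; linarith
    · intro c hc a ha; simp only [Set.mem_setOf_eq, map_smul, smul_eq_mul] at *
      exact mul_nonneg hc ha
  exact this hx

lemma zero_on_coneHull {s : Set V} (u : V →ₗ[ℝ] ℝ) (h : ∀ x ∈ s, u x = 0) :
    ∀ x ∈ coneHull s, u x = 0 := by
  intro x hx
  have : coneHull s ⊆ {y | u y = 0} := by
    refine coneHull_subset ⟨by simp, ?_, ?_⟩ h
    · intro a ha b hb; simp only [Set.mem_setOf_eq, map_add] at *; rw [ha, hb, add_zero]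
    · intro c hc a ha; simp only [Set.mem_setOf_eq, map_smul, smul_eq_mul] at *
      rw [ha, mul_zero]
  exact this hx

end ConeBasics
section Faces

variable {V : Type*} [AddCommGroup V] [Module ℝ V]

lemma isCone_inter {σ τ : Set V} (hσ : IsCone σ) (hτ : IsCone τ) : IsCone (σ ∩ τ) :=
  ⟨⟨hσ.1, hτ.1⟩, fun x hx y hy => ⟨hσ.2.1 _ hx.1 _ hy.1, hτ.2.1 _ hx.2 _ hy.2⟩,
    fun c hc x hx => ⟨hσ.2.2 c hc _ hx.1, hτ.2.2 c hc _ hx.2⟩⟩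

lemma isFaceOf_refl {σ : Set V} (hσ : IsCone σ) : IsFaceOf σ σ :=
  ⟨hσ, le_rfl, fun _ hx _ hy _ => ⟨hx, hy⟩⟩

lemma IsFaceOf.trans {τ δ σ : Set V} (h1 : IsFaceOf τ δ) (h2 : IsFaceOf δ σ) :
    IsFaceOf τ σ := by
  refine ⟨h1.1, h1.2.1.trans h2.2.1, fun x hx y hy hxy => ?_⟩
  obtain ⟨hx', hy'⟩ := h2.2.2 x hx y hy (h1.2.1 hxy)
  exact h1.2.2 x hx' y hy' hxy

lemma IsFaceOf.inter {τ τ' σ : Set V} (h1 : IsFaceOf τ σ) (h2 : IsFaceOf τ' σ) :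
    IsFaceOf (τ ∩ τ') σ := by
  refine ⟨isCone_inter h1.1 h2.1, fun x hx => h1.2.1 hx.1, fun x hx y hy hxy => ?_⟩
  obtain ⟨ha, hb⟩ := h1.2.2 x hx y hy hxy.1
  obtain ⟨hc, hd⟩ := h2.2.2 x hx y hy hxy.2
  exact ⟨⟨ha, hc⟩, ⟨hb, hd⟩⟩

/-- A face of `σ` contained in a subcone `F ⊆ σ` is a face of `F`. -/
lemma IsFaceOf.of_subset {τ F σ : Set V} (h : IsFaceOf τ σ) (hτF : τ ⊆ F) (hFσ : F ⊆ σ) :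
    IsFaceOf τ F :=
  ⟨h.1, hτF, fun x hx y hy hxy => h.2.2 x (hFσ hx) y (hFσ hy) hxy⟩

/-- Decomposition of finite sums along a face. -/
lemma IsFaceOf.sum_mem_of_mem {F σ : Set V} (hσ : IsCone σ) (hF : IsFaceOf F σ)
    {ι : Type*} (t : Finset ι) (f : ι → V) (hf : ∀ i ∈ t, f i ∈ σ)
    (hsum : ∑ i ∈ t, f i ∈ F) : ∀ i ∈ t, f i ∈ F := by
  classical
  induction t using Finset.induction_on with
  | empty => simp
  | insert a t hnot ih =>
    rw [Finset.sum_insert hnot] at hsum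
    have hmem : ∀ i ∈ t, f i ∈ σ := fun i hi => hf i (Finset.mem_insert_of_mem hi)
    have hrest : ∑ i ∈ t, f i ∈ σ := hσ.sum_mem t f hmem
    obtain ⟨h1, h2⟩ := hF.2.2 _ (hf a (Finset.mem_insert_self a t)) _ hrest hsum
    intro i hi
    rcases Finset.mem_insert.mp hi with rfl | hi
    · exact h1
    · exact ih hmem h2 i hi

open Classical in
/-- A face of a finitely generated cone is the cone hull of the generators it contains. -/
lemma IsFaceOf.eq_coneHull_filter {t : Finset V} {F : Set V}
    (hF : IsFaceOf F (coneHull (↑t : Set V))) :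
    F = coneHull (↑(t.filter fun v => v ∈ F) : Set V) := by
  classical
  apply le_antisymm
  · intro x hx
    obtain ⟨c, hc, rfl⟩ := mem_coneHull_finset_iff.mp (hF.2.1 hx)
    have hterm : ∀ v ∈ t, c v • v ∈ F := by
      refine hF.sum_mem_of_mem (isCone_coneHull _) t _ (fun v hv => ?_) hx
      exact (isCone_coneHull _).2.2 _ (hc v hv) _ (subset_coneHull _ (by exact_mod_cast hv))
    rw [← Finset.sum_filter_add_sum_filter_not t (fun v => v ∈ F)]
    refine (isCone_coneHull _).2.1 _ ?_ _ ?_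
    · refine (isCone_coneHull _).sum_mem _ _ fun v hv => ?_
      refine (isCone_coneHull _).2.2 _ (hc v (Finset.mem_filter.mp hv).1) _ ?_
      exact subset_coneHull _ (by exact_mod_cast hv)
    · have hz : ∀ v ∈ t.filter (fun v => ¬ v ∈ F), c v • v = 0 := by
        intro v hv
        obtain ⟨hvt, hvF⟩ := Finset.mem_filter.mp hv
        by_cases hcv : c v = 0
        · rw [hcv, zero_smul]
        · exfalso
          apply hvF
          have hc0 : 0 < c v := lt_of_le_of_ne (hc v hvt) (Ne.symm hcv)
          have := hF.1.2.2 (c v)⁻¹ (by positivity) _ (hterm v hvt)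
          rwa [smul_smul, inv_mul_cancel₀ hcv, one_smul] at this
      rw [Finset.sum_congr rfl hz]
      simp [zero_mem_coneHull]
  · refine coneHull_subset hF.1 fun v hv => ?_
    have := Finset.mem_coe.mp hv
    exact (Finset.mem_filter.mp this).2

/-- In a strictly convex cone, a finite family summing to zero is identically zero. -/
lemma zero_sum_eq_zero {σ : Set V} (hσ : IsCone σ) (hsc : IsStrictlyConvexCone σ)
    {ι : Type*} (t : Finset ι) (f : ι → V) (hf : ∀ i ∈ t, f i ∈ σ)
    (hsum : ∑ i ∈ t, f i = 0) : ∀ i ∈ t, f i = 0 := by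
  classical
  intro i hi
  apply hsc _ (hf i hi)
  have h2 : -(f i) = ∑ j ∈ t.erase i, f j := by
    have h3 := Finset.add_sum_erase t f hi
    rw [hsum, neg_eq_iff_add_eq_zero] at *
    exact h3
  rw [h2]
  exact hσ.sum_mem _ _ fun j hj => hf j (Finset.mem_of_mem_erase hj)

end Faces
section Farkas

variable {V : Type*} [AddCommGroup V] [Module ℝ V]

lemma coneHull_empty : coneHull (∅ : Set V) = {0} := by
  apply le_antisymm
  · refine coneHull_subset ⟨rfl, ?_, ?_⟩ (by simp)
    · rintro x rfl y rfl; simp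
    · rintro c _ x rfl; simp
  · rintro x rfl; exact zero_mem_coneHull _

lemma isCone_image {W : Type*} [AddCommGroup W] [Module ℝ W] (f : V →ₗ[ℝ] W)
    {σ : Set V} (hσ : IsCone σ) : IsCone (f '' σ) := by
  refine ⟨⟨0, hσ.1, map_zero f⟩, ?_, ?_⟩
  · rintro _ ⟨x, hx, rfl⟩ _ ⟨y, hy, rfl⟩
    exact ⟨x + y, hσ.2.1 _ hx _ hy, map_add f x y⟩
  · rintro c hc _ ⟨x, hx, rfl⟩
    exact ⟨c • x, hσ.2.2 c hc _ hx, map_smul f c x⟩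

/-- Farkas' lemma: if `p` is not in the cone generated by the finite set `S`,
there is a linear functional nonnegative on `S` and negative at `p`. -/
theorem farkas_aux {d : ℕ} (N : ℕ) : ∀ (S : Finset (Fin d → ℝ)), S.card ≤ N →
    ∀ (p : Fin d → ℝ), p ∉ coneHull (↑S : Set (Fin d → ℝ)) →
    ∃ u : (Fin d → ℝ) →ₗ[ℝ] ℝ, (∀ s ∈ S, 0 ≤ u s) ∧ u p < 0 := by
  classical
  induction N with
  | zero =>
    intro S hS p hp
    rw [Nat.le_zero, Finset.card_eq_zero] at hS
    subst hS
    rw [Finset.coe_empty, coneHull_empty] at hp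
    have hp0 : p ≠ 0 := fun h => hp (by simp [h])
    refine ⟨-(∑ i, p i • LinearMap.proj i), by simp, ?_⟩
    have hpos : (0:ℝ) < ∑ i, p i * p i := by
      obtain ⟨i, hi⟩ : ∃ i, p i ≠ 0 := by
        by_contra h
        push_neg at h
        exact hp0 (funext h)
      exact Finset.sum_pos' (fun j _ => mul_self_nonneg _)
        ⟨i, Finset.mem_univ i, mul_self_pos.mpr hi⟩
    simp only [LinearMap.neg_apply, LinearMap.coe_sum, Finset.sum_apply,
      LinearMap.smul_apply, LinearMap.proj_apply, smul_eq_mul]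
    linarith
  | succ N ih =>
    intro S hS p hp
    rcases S.eq_empty_or_nonempty with rfl | ⟨a, ha⟩
    · exact ih ∅ (by simp) p hp
    set S' := S.erase a with hS'
    have hcard : S'.card ≤ N := by
      rw [hS', Finset.card_erase_of_mem ha]
      omega
    have hp' : p ∉ coneHull (↑S' : Set (Fin d → ℝ)) := fun h =>
      hp (coneHull_mono (by exact_mod_cast Finset.erase_subset a S) h)
    obtain ⟨u, hu, hup⟩ := ih S' hcard p hp'
    rcases le_or_gt 0 (u a) with hua | hua
    · refine ⟨u, fun s hs => ?_, hup⟩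
      rcases eq_or_ne s a with rfl | hsa
      · exact hua
      · exact hu s (Finset.mem_erase.mpr ⟨hsa, hs⟩)
    · set φ : (Fin d → ℝ) →ₗ[ℝ] (Fin d → ℝ) :=
        LinearMap.id - LinearMap.smulRight u ((u a)⁻¹ • a) with hφ
      have hφapp : ∀ x, φ x = x - u x • ((u a)⁻¹ • a) := fun x => rfl
      have hφa : φ a = 0 := by
        rw [hφapp, smul_smul, mul_inv_cancel₀ (ne_of_lt hua), one_smul, sub_self]
      set T := S'.image φ with hT
      have hTcard : T.card ≤ N := le_trans Finset.card_image_le hcard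
      have hφp : φ p ∉ coneHull (↑T : Set (Fin d → ℝ)) := by
        intro hmem
        rw [hT, Finset.coe_image] at hmem
        have himg : coneHull (φ '' (↑S' : Set (Fin d → ℝ))) ⊆
            φ '' coneHull (↑S' : Set (Fin d → ℝ)) := by
          refine coneHull_subset (isCone_image φ (isCone_coneHull _)) ?_
          exact Set.image_mono (f := φ) (subset_coneHull _)
        obtain ⟨q, hq, hφpq⟩ := himg hmem
        have huq : 0 ≤ u q := nonneg_on_coneHull u hu q hq
        have hpeq : p = q + ((u p - u q) * (u a)⁻¹) • a := by
          have h1 : p - u p • ((u a)⁻¹ • a) = q - u q • ((u a)⁻¹ • a) := by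
            rw [← hφapp, ← hφapp, hφpq]
          have h2 : p = q + (u p - u q) • ((u a)⁻¹ • a) := by
            rw [sub_smul]
            rw [sub_eq_sub_iff_sub_eq_sub] at h1
            rw [← h1]
            abel
          rw [smul_smul] at h2
          exact h2
        have htpos : 0 ≤ (u p - u q) * (u a)⁻¹ :=
          le_of_lt (mul_pos_of_neg_of_neg (by linarith) (inv_lt_zero'.mpr hua))
        apply hp
        rw [hpeq]
        refine (isCone_coneHull _).2.1 _ ?_ _ ?_
        · exact coneHull_mono (by exact_mod_cast Finset.erase_subset a S) hq
        · exact (isCone_coneHull _).2.2 _ htpos _ (subset_coneHull _ (by exact_mod_cast ha))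
      obtain ⟨v, hv, hvp⟩ := ih T hTcard (φ p) hφp
      refine ⟨v.comp φ, fun s hs => ?_, hvp⟩
      rcases eq_or_ne s a with rfl | hsa
      · rw [LinearMap.comp_apply, hφa, map_zero]
      · exact hv (φ s) (Finset.mem_image_of_mem φ (Finset.mem_erase.mpr ⟨hsa, hs⟩))

theorem farkas {d : ℕ} (S : Finset (Fin d → ℝ)) (p : Fin d → ℝ)
    (hp : p ∉ coneHull (↑S : Set (Fin d → ℝ))) :
    ∃ u : (Fin d → ℝ) →ₗ[ℝ] ℝ, (∀ s ∈ S, 0 ≤ u s) ∧ u p < 0 :=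
  farkas_aux S.card S le_rfl p hp

end Farkas
section Exposed

open Classical in
/-- Every face of a finitely generated cone is exposed: it is cut out by a
linear functional nonnegative on the cone. -/
lemma IsFaceOf.exists_exposing {d : ℕ} (t : Finset (Fin d → ℝ)) {F : Set (Fin d → ℝ)}
    (hF : IsFaceOf F (coneHull (↑t : Set (Fin d → ℝ)))) :
    ∃ u : (Fin d → ℝ) →ₗ[ℝ] ℝ, (∀ x ∈ coneHull (↑t : Set (Fin d → ℝ)), 0 ≤ u x) ∧
      {x | x ∈ coneHull (↑t : Set (Fin d → ℝ)) ∧ u x = 0} = F := by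
  set C := coneHull (↑t : Set (Fin d → ℝ)) with hC
  set tF := t.filter (fun v => v ∈ F) with htF
  set tc := t.filter (fun v => v ∉ F) with htc
  have hFeq : F = coneHull (↑tF : Set (Fin d → ℝ)) := hF.eq_coneHull_filter
  have step1 : ∀ h ∈ tc, ∃ u : (Fin d → ℝ) →ₗ[ℝ] ℝ,
      (∀ s ∈ t, 0 ≤ u s) ∧ (∀ f ∈ tF, u f = 0) ∧ 0 < u h := by
    intro h hh
    obtain ⟨hht, hhF⟩ := Finset.mem_filter.mp hh
    set Sh := t ∪ tF.image (fun v => -v) with hSh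
    have hnot : -h ∉ coneHull (↑Sh : Set (Fin d → ℝ)) := by
      intro hmem
      set D := {x : Fin d → ℝ | ∃ c ∈ C, ∃ f ∈ F, x = c - f} with hD
      have hDcone : IsCone D := by
        refine ⟨⟨0, (isCone_coneHull _).1, 0, hF.1.1, by simp⟩, ?_, ?_⟩
        · rintro _ ⟨c, hc, f, hf, rfl⟩ _ ⟨c', hc', f', hf', rfl⟩
          exact ⟨c + c', (isCone_coneHull _).2.1 _ hc _ hc', f + f', hF.1.2.1 _ hf _ hf',
            by abel⟩
        · rintro e he _ ⟨c, hc, f, hf, rfl⟩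
          exact ⟨e • c, (isCone_coneHull _).2.2 e he _ hc, e • f, hF.1.2.2 e he _ hf,
            by rw [smul_sub]⟩
      have hsub : (↑Sh : Set (Fin d → ℝ)) ⊆ D := by
        intro v hv
        rw [hSh] at hv
        rcases Finset.mem_union.mp (by exact_mod_cast hv) with hv | hv
        · exact ⟨v, subset_coneHull _ (by exact_mod_cast hv), 0, hF.1.1, by simp⟩
        · obtain ⟨f, hf, rfl⟩ := Finset.mem_image.mp hv
          exact ⟨0, (isCone_coneHull _).1, f, (Finset.mem_filter.mp hf).2, by simp⟩
      obtain ⟨c, hc, f, hf, heq⟩ := coneHull_subset hDcone hsub hmem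
      have hhc : h + c = f := by
        have h' : h + c = -(c - f) + c + f - f + h + c - c - h := by rw [← heq]; abel
        rw [h']; abel
      exact hhF (hF.2.2 h (subset_coneHull _ (by exact_mod_cast hht)) c hc
        (hhc ▸ hf)).1
    obtain ⟨u, hu, hup⟩ := farkas Sh (-h) hnot
    have huh : 0 < u h := by
      rw [map_neg] at hup; linarith
    refine ⟨u, fun s hs => hu s (Finset.mem_union_left _ hs), fun f hf => ?_, huh⟩
    have h1 : 0 ≤ u f := hu f (Finset.mem_union_left _ (Finset.mem_filter.mp hf).1)
    have h2 : 0 ≤ u (-f) := hu (-f) (Finset.mem_union_right _ (Finset.mem_image_of_mem _ hf))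
    rw [map_neg] at h2
    linarith
  choose! g hg1 hg2 hg3 using step1
  set u : (Fin d → ℝ) →ₗ[ℝ] ℝ := ∑ h ∈ tc, g h with hu
  have huapp : ∀ x, u x = ∑ h ∈ tc, g h x := by
    intro x; rw [hu, LinearMap.coe_sum, Finset.sum_apply]
  have hut : ∀ s ∈ t, 0 ≤ u s := by
    intro s hs
    rw [huapp]
    exact Finset.sum_nonneg fun h hh => hg1 h hh s hs
  have hunn : ∀ x ∈ C, 0 ≤ u x := nonneg_on_coneHull u (fun x hx => hut x (by exact_mod_cast hx))
  have huF : ∀ x ∈ F, u x = 0 := by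
    intro x hx
    rw [hFeq] at hx
    refine zero_on_coneHull u (fun v hv => ?_) x hx
    rw [huapp]
    exact Finset.sum_eq_zero fun h hh => hg2 h hh v (by exact_mod_cast hv)
  have hupos : ∀ h ∈ tc, 0 < u h := by
    intro h hh
    rw [huapp]
    refine lt_of_lt_of_le (hg3 h hh) ?_
    exact Finset.single_le_sum (fun h' hh' => hg1 h' hh' h (Finset.mem_filter.mp hh).1) hh
  refine ⟨u, hunn, ?_⟩
  apply le_antisymm
  · rintro x ⟨hxC, hxu⟩
    obtain ⟨c, hc, rfl⟩ := mem_coneHull_finset_iff.mp hxC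
    have hterms : ∀ v ∈ t, 0 ≤ c v * u v := fun v hv =>
      mul_nonneg (hc v hv) (hut v hv)
    have hsum0 : ∑ v ∈ t, c v * u v = 0 := by
      rw [← hxu, map_sum]
      exact Finset.sum_congr rfl fun v _ => by rw [map_smul, smul_eq_mul]
    have hzero : ∀ v ∈ t, c v * u v = 0 :=
      fun v hv => (Finset.sum_eq_zero_iff_of_nonneg hterms).mp hsum0 v hv
    have hcv : ∀ v ∈ tc, c v = 0 := by
      intro v hv
      have := hzero v (Finset.mem_filter.mp hv).1
      have hpos := hupos v hv
      by_contra hne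
      have : 0 < c v * u v :=
        mul_pos (lt_of_le_of_ne (hc v (Finset.mem_filter.mp hv).1) (Ne.symm hne)) hpos
      linarith [hzero v (Finset.mem_filter.mp hv).1]
    rw [hFeq]
    rw [← Finset.sum_filter_add_sum_filter_not t (fun v => v ∈ F)]
    have h2 : ∑ v ∈ t.filter (fun v => ¬ v ∈ F), c v • v = 0 := by
      refine Finset.sum_eq_zero fun v hv => ?_
      rw [hcv v (by simpa [htc] using hv), zero_smul]
    rw [h2, add_zero]
    refine (isCone_coneHull _).sum_mem _ _ fun v hv => ?_
    exact (isCone_coneHull _).2.2 _ (hc v (Finset.mem_filter.mp hv).1) _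
      (subset_coneHull _ (by exact_mod_cast hv))
  · intro x hx
    exact ⟨hF.2.1 hx, huF x hx⟩

end Exposed
section Rays

variable {V : Type*} [AddCommGroup V] [Module ℝ V]

/-- The ray generated by a vector. -/
def rayOf (v : V) : Set V := {x | ∃ c : ℝ, 0 ≤ c ∧ x = c • v}

lemma mem_rayOf_self (v : V) : v ∈ rayOf v := ⟨1, zero_le_one, (one_smul ℝ v).symm⟩

lemma isCone_rayOf (v : V) : IsCone (rayOf v) := by
  refine ⟨⟨0, le_rfl, (zero_smul ℝ v).symm⟩, ?_, ?_⟩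
  · rintro _ ⟨c, hc, rfl⟩ _ ⟨c', hc', rfl⟩
    exact ⟨c + c', by linarith, (add_smul c c' v).symm⟩
  · rintro e he _ ⟨c, hc, rfl⟩
    exact ⟨e * c, mul_nonneg he hc, (smul_smul e c _)⟩

lemma span_rayOf (v : V) : Submodule.span ℝ (rayOf v) = Submodule.span ℝ {v} := by
  apply le_antisymm
  · rw [Submodule.span_le]
    rintro _ ⟨c, _, rfl⟩
    exact Submodule.smul_mem _ c (Submodule.subset_span rfl)
  · rw [Submodule.span_le]
    intro x hx
    rw [Set.mem_singleton_iff] at hx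
    subst hx
    exact Submodule.subset_span (mem_rayOf_self x)

lemma finrank_span_rayOf {v : V} (hv : v ≠ 0) :
    Module.finrank ℝ (Submodule.span ℝ (rayOf v)) = 1 := by
  rw [span_rayOf]
  exact finrank_span_singleton hv

/-- A one-dimensional strictly convex cone containing a nonzero vector `g`
is contained in the ray of `g`. -/
lemma subset_rayOf_of_finrank_one [FiniteDimensional ℝ V] {ρ : Set V} (hρ : IsCone ρ)
    (hsc : IsStrictlyConvexCone ρ) (hrk : Module.finrank ℝ (Submodule.span ℝ ρ) = 1)
    {g : V} (hg : g ∈ ρ) (hg0 : g ≠ 0) : ρ ⊆ rayOf g := by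
  have hle : Submodule.span ℝ {g} ≤ Submodule.span ℝ ρ :=
    Submodule.span_mono (Set.singleton_subset_iff.mpr hg)
  have heq : Submodule.span ℝ {g} = Submodule.span ℝ ρ := by
    apply Submodule.eq_of_le_of_finrank_le hle
    rw [hrk, finrank_span_singleton hg0]
  intro x hx
  have hx' : x ∈ Submodule.span ℝ {g} := heq ▸ Submodule.subset_span hx
  obtain ⟨c, rfl⟩ := Submodule.mem_span_singleton.mp hx'
  rcases le_or_gt 0 c with hc | hc
  · exact ⟨c, hc, rfl⟩
  · have hneg : -(c • g) ∈ ρ := by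
      rw [← neg_smul]
      exact hρ.2.2 (-c) (by linarith) g hg
    have := hsc _ hx hneg
    rw [this]
    exact ⟨0, le_rfl, (zero_smul ℝ g).symm⟩

/-- Minkowski-type lemma: a strictly convex finitely generated cone is generated
by its rays (its one-dimensional faces). -/
lemma minkowski_aux (N : ℕ) : ∀ t : Finset V, t.card ≤ N →
    IsStrictlyConvexCone (coneHull (↑t : Set V)) →
    (↑t : Set V) ⊆ coneHull (⋃₀ {ρ | IsFaceOf ρ (coneHull (↑t : Set V)) ∧
      ∃ v, v ≠ (0:V) ∧ ρ = rayOf v}) := by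
  classical
  induction N with
  | zero =>
    intro t ht _
    rw [Nat.le_zero, Finset.card_eq_zero] at ht
    subst ht
    simp
  | succ N ih =>
    intro t hcard hsc g hgmem
    have hgt : g ∈ t := by exact_mod_cast hgmem
    rcases eq_or_ne g 0 with rfl | hg0
    · exact zero_mem_coneHull _
    by_cases hgc : g ∈ coneHull (↑(t.erase g) : Set V)
    · have hEq : coneHull (↑(t.erase g) : Set V) = coneHull (↑t : Set V) := by
        apply le_antisymm (coneHull_mono (by exact_mod_cast Finset.erase_subset g t))
        refine coneHull_subset (isCone_coneHull _) fun v hv => ?_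
        have hvt : v ∈ t := by exact_mod_cast hv
        rcases eq_or_ne v g with rfl | hvg
        · exact hgc
        · exact subset_coneHull _ (by exact_mod_cast Finset.mem_erase.mpr ⟨hvg, hvt⟩)
      have hcard' : (t.erase g).card ≤ N := by
        rw [Finset.card_erase_of_mem hgt]; omega
      have hsc' : IsStrictlyConvexCone (coneHull (↑(t.erase g) : Set V)) := by
        rw [hEq]; exact hsc
      have hIH := ih (t.erase g) hcard' hsc'
      rw [hEq] at hIH
      have : coneHull (↑(t.erase g) : Set V) ⊆ coneHull (⋃₀ {ρ | IsFaceOf ρ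
          (coneHull (↑t : Set V)) ∧ ∃ v, v ≠ (0:V) ∧ ρ = rayOf v}) :=
        coneHull_subset (isCone_coneHull _) hIH
      exact this hgc
    · -- `g` generates a one-dimensional face
      have hface : IsFaceOf (rayOf g) (coneHull (↑t : Set V)) := by
        refine ⟨isCone_rayOf g, ?_, ?_⟩
        · rintro _ ⟨c, hc, rfl⟩
          exact (isCone_coneHull _).2.2 c hc g (subset_coneHull _ hgmem)
        · rintro x hx y hy ⟨e, he, hxy⟩
          obtain ⟨a, ha, hxa⟩ := mem_coneHull_finset_iff.mp hx
          obtain ⟨b, hb, hyb⟩ := mem_coneHull_finset_iff.mp hy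
          set s : V → ℝ := fun v => a v + b v with hs
          have hxy2 : ∑ v ∈ t, s v • v = e • g := by
            rw [Finset.sum_congr rfl (fun v _ => add_smul (a v) (b v) v),
              Finset.sum_add_distrib, ← hxa, ← hyb, ← hxy]
          have h2 : s g • g + ∑ v ∈ t.erase g, s v • v = e • g := by
            rw [Finset.add_sum_erase t (fun v => s v • v) hgt, hxy2]
          rcases le_or_gt e (s g) with hesg | hesg
          · set f : V → V := fun v => (if v = g then s v - e else s v) • v with hf
            have hsumf : ∑ v ∈ t, f v = 0 := by
              have h1 : ∑ v ∈ t.erase g, f v = ∑ v ∈ t.erase g, s v • v :=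
                Finset.sum_congr rfl fun v hv => by
                  simp [hf, (Finset.mem_erase.mp hv).1]
              have h3 : ∑ v ∈ t.erase g, s v • v = e • g - s g • g := by
                rw [eq_sub_iff_add_eq, add_comm]; exact h2
              calc ∑ v ∈ t, f v = f g + ∑ v ∈ t.erase g, f v :=
                    (Finset.add_sum_erase t f hgt).symm
                _ = (s g - e) • g + (e • g - s g • g) := by rw [h1, h3]; simp [hf]
                _ = 0 := by rw [sub_smul]; abel
            have hfmem : ∀ v ∈ t, f v ∈ coneHull (↑t : Set V) := by
              intro v hv
              have hcoef : 0 ≤ (if v = g then s v - e else s v) := by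
                split_ifs with h
                · subst h; linarith
                · exact add_nonneg (ha v hv) (hb v hv)
              exact (isCone_coneHull _).2.2 _ hcoef _ (subset_coneHull _ (by exact_mod_cast hv))
            have hzero := zero_sum_eq_zero (isCone_coneHull _) hsc t f hfmem hsumf
            have herase : ∀ v ∈ t.erase g, s v • v = 0 := by
              intro v hv
              have := hzero v (Finset.mem_of_mem_erase hv)
              simpa [hf, (Finset.mem_erase.mp hv).1] using this
            have hxg : ∀ (c : V → ℝ), (∀ v ∈ t, 0 ≤ c v) → (∀ v ∈ t, c v ≤ s v) →
                ∑ v ∈ t, c v • v = c g • g := by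
              intro c hc hcs
              rw [← Finset.add_sum_erase t (fun v => c v • v) hgt]
              have : ∑ v ∈ t.erase g, c v • v = 0 := by
                refine Finset.sum_eq_zero fun v hv => ?_
                have hvt := Finset.mem_of_mem_erase hv
                rcases smul_eq_zero.mp (herase v hv) with hsv | hv0
                · have : c v = 0 := le_antisymm (hsv ▸ hcs v hvt) (hc v hvt)
                  rw [this, zero_smul]
                · rw [hv0, smul_zero]
              rw [this, add_zero]
            constructor
            · refine ⟨a g, ha g hgt, ?_⟩
              rw [hxa]
              exact hxg a ha fun v hv => by
                have := hb v hv; simp only [hs]; linarith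
            · refine ⟨b g, hb g hgt, ?_⟩
              rw [hyb]
              exact hxg b hb fun v hv => by
                have := ha v hv; simp only [hs]; linarith
          · exfalso
            apply hgc
            have h4 : (e - s g) • g = ∑ v ∈ t.erase g, s v • v := by
              rw [sub_smul, sub_eq_iff_eq_add, ← h2]; abel
            have hsum : ∑ v ∈ t.erase g, s v • v ∈ coneHull (↑(t.erase g) : Set V) := by
              refine (isCone_coneHull _).sum_mem _ _ fun v hv => ?_
              refine (isCone_coneHull _).2.2 _ ?_ _ (subset_coneHull _ (by exact_mod_cast hv))
              exact add_nonneg (ha v (Finset.mem_of_mem_erase hv))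
                (hb v (Finset.mem_of_mem_erase hv))
            have hmem2 : (e - s g)⁻¹ • ((e - s g) • g) ∈ coneHull (↑(t.erase g) : Set V) := by
              rw [h4]
              exact (isCone_coneHull _).2.2 _ (le_of_lt (inv_pos.mpr (by linarith))) _ hsum
            rwa [smul_smul, inv_mul_cancel₀ (by linarith : e - s g ≠ 0), one_smul] at hmem2
      refine subset_coneHull _ ?_
      exact ⟨rayOf g, ⟨hface, g, hg0, rfl⟩, mem_rayOf_self g⟩

/-- A strictly convex finitely generated cone is contained in the cone hull of
its one-dimensional faces. -/
lemma minkowski (t : Finset V) (hsc : IsStrictlyConvexCone (coneHull (↑t : Set V))) :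
    coneHull (↑t : Set V) ⊆ coneHull (⋃₀ {ρ | IsFaceOf ρ (coneHull (↑t : Set V)) ∧
      ∃ v, v ≠ (0:V) ∧ ρ = rayOf v}) :=
  coneHull_subset (isCone_coneHull _) (minkowski_aux t.card t le_rfl hsc)

end Rays
lemma extR_id {m : ℕ} : extR (LinearMap.id : (Fin m → ℤ) →ₗ[ℤ] (Fin m → ℤ)) = LinearMap.id := by
  unfold extR
  have h : (Matrix.of fun i j => (((LinearMap.id : (Fin m → ℤ) →ₗ[ℤ] _) (Pi.single j 1)) i : ℝ))
      = (1 : Matrix (Fin m) (Fin m) ℝ) := by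
    ext i j
    simp only [Matrix.of_apply, LinearMap.id_apply, Matrix.one_apply, Pi.single_apply]
    split_ifs <;> simp
  rw [h, Matrix.mulVecLin_one]
/-- Let `Δ` be a fan in `N`, `L ⊆ N` a primitive sublattice
and `P : (N,Δ) → (Ñ,Δ̃)` the projection defining the quotient fan `Δ̃` of `Δ`
by `L`, with maximal cones `τ 1, …, τ r` of `Δ̃`. For each `i` let
`σ i := conv{ρ ∈ Δ^(1) : P^ℝ(ρ) ⊆ τ i}`. Then `σ 1, …, σ r` are the maximal
cones of a quasifan in `N`; in particular each intersection `σ i ∩ σ j` is a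
face of `σ i`. -/
theorem good_model_quasifan {n m r : ℕ} (Δ : Set (Set (Fin n → ℝ))) (hΔ : IsFan Δ)
    (L : Submodule ℤ (Fin n → ℤ)) (hL : IsPrimitive L)
    (P : (Fin n → ℤ) →ₗ[ℤ] (Fin m → ℤ)) (Δt : Set (Set (Fin m → ℝ)))
    (hquot : IsQuotientFan Δ L P Δt)
    (τ : Fin r → Set (Fin m → ℝ)) (hτ : Set.range τ = maxCones Δt)
    (σ : Fin r → Set (Fin n → ℝ))
    (hσ : ∀ i, σ i = coneHull (⋃₀ {ρ | IsRay Δ ρ ∧ extR P '' ρ ⊆ τ i})) :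
    (∃ Sig : Set (Set (Fin n → ℝ)), IsQuasifan Sig ∧ maxCones Sig = Set.range σ) ∧
    ∀ i j, IsFaceOf (σ i ∩ σ j) (σ i) := by
  classical
  obtain ⟨hPsurj, hLker, -, hΔt, hPmap, huniv⟩ := hquot
  set Q := extR P with hQ
  set R : Fin r → Set (Set (Fin n → ℝ)) :=
    fun i => {ρ | IsRay Δ ρ ∧ Q '' ρ ⊆ τ i} with hR
  have hσR : ∀ i, σ i = coneHull (⋃₀ R i) := hσ
  have hΔfin : Δ.Finite := hΔ.1.1.1
  have hΔrat : ∀ σ' ∈ Δ, IsRatCone σ' := hΔ.1.1.2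
  have hΔface : ∀ σ' ∈ Δ, ∀ F, IsFaceOf F σ' → F ∈ Δ := hΔ.1.2.1
  have hΔsc : ∀ σ' ∈ Δ, IsStrictlyConvexCone σ' := hΔ.2
  have hτmax : ∀ i, τ i ∈ maxCones Δt := fun i => hτ ▸ Set.mem_range_self i
  have hτΔt : ∀ i, τ i ∈ Δt := fun i => (hτmax i).1
  have hΔtcone : ∀ τ' ∈ Δt, IsCone τ' := by
    intro τ' hτ'
    obtain ⟨s, hs⟩ := hΔt.1.1.2 τ' hτ'
    rw [hs]; exact isCone_coneHull _
  have hΔcone : ∀ σ' ∈ Δ, IsCone σ' := by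
    intro σ' hσ'
    obtain ⟨s, hs⟩ := hΔrat σ' hσ'
    rw [hs]; exact isCone_coneHull _
  have hσcone : ∀ i, IsCone (σ i) := fun i => by rw [hσR]; exact isCone_coneHull _
  -- the projection maps σ i into τ i
  have hQσ : ∀ i, Q '' σ i ⊆ τ i := by
    intro i
    rw [hσR]
    refine (image_coneHull_subset Q _).trans ?_
    refine coneHull_subset (hΔtcone _ (hτΔt i)) ?_
    rintro _ ⟨y, hy, rfl⟩
    obtain ⟨ρ, hρ, hyρ⟩ := hy
    exact hρ.2 ⟨y, hyρ, rfl⟩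
  -- explicit finite integral generators for the σ i
  set gen : Set (Fin n → ℝ) → Finset (Fin n → ℤ) :=
    fun ρ => if h : IsRatCone ρ then h.choose else ∅ with hgen
  have hgenspec : ∀ ρ : Set (Fin n → ℝ), IsRatCone ρ → ρ = coneHull (toR '' ↑(gen ρ)) := by
    intro ρ h
    rw [hgen]
    simp only [dif_pos h]
    exact h.choose_spec
  have hRΔ : ∀ i, R i ⊆ Δ := fun i ρ hρ => hρ.1.1
  have hRfin : ∀ i, (R i).Finite := fun i => hΔfin.subset (hRΔ i)
  set G : Fin r → Finset (Fin n → ℤ) := fun i => (hRfin i).toFinset.biUnion gen with hG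
  have hσG : ∀ i, σ i = coneHull (toR '' ↑(G i)) := by
    intro i
    apply le_antisymm
    · rw [hσR]
      refine coneHull_subset (isCone_coneHull _) ?_
      rintro x ⟨ρ, hρ, hxρ⟩
      have hrat : IsRatCone ρ := hΔrat ρ (hρ.1.1)
      have : ρ ⊆ coneHull (toR '' ↑(G i)) := by
        rw [hgenspec ρ hrat]
        apply coneHull_mono
        apply Set.image_mono
        intro v hv
        exact_mod_cast Finset.subset_biUnion_of_mem gen ((hRfin i).mem_toFinset.mpr hρ)
          (by exact_mod_cast hv)
      exact this hxρ
    · refine coneHull_subset (by rw [hσR]; exact isCone_coneHull _) ?_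
      rintro _ ⟨v, hv, rfl⟩
      obtain ⟨ρ, hρ', hvρ⟩ := Finset.mem_biUnion.mp (by exact_mod_cast hv)
      have hρR : ρ ∈ R i := (hRfin i).mem_toFinset.mp hρ'
      have hrat : IsRatCone ρ := hΔrat ρ hρR.1.1
      have : toR v ∈ ρ := by
        rw [hgenspec ρ hrat]
        exact subset_coneHull _ ⟨v, by exact_mod_cast hvρ, rfl⟩
      rw [hσR]
      exact subset_coneHull _ ⟨ρ, hρR, this⟩
  -- the pairwise intersection is an (exposed) face: main face statement
  have hface : ∀ i j, IsFaceOf (σ i ∩ σ j) (σ i) := by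
    intro i j
    have hFt : IsFaceOf (τ i ∩ τ j) (τ i) := hΔt.1.2.2 (τ i) (hτΔt i) (τ j) (hτΔt j)
    obtain ⟨s, hs⟩ := hΔt.1.1.2 (τ i) (hτΔt i)
    have hs' : τ i = coneHull (↑(s.image toR) : Set (Fin m → ℝ)) := by
      rw [hs, Finset.coe_image]
    obtain ⟨u, hu1, hu2⟩ := IsFaceOf.exists_exposing (s.image toR) (hs' ▸ hFt)
    rw [← hs'] at hu1 hu2
    -- every x in σ i with u (Q x) = 0 lies in σ j
    have hsub2 : ∀ x ∈ σ i, u (Q x) = 0 → x ∈ σ j := by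
      intro x hxσ hux
      rw [hσR] at hxσ ⊢
      obtain ⟨t, c, hts, hc, rfl⟩ := mem_coneHull_iff.mp hxσ
      have hQv : ∀ v ∈ t, Q v ∈ τ i := by
        intro v hv
        obtain ⟨ρ, hρ, hvρ⟩ := hts hv
        exact hρ.2 ⟨v, hvρ, rfl⟩
      have hterms : ∀ v ∈ t, 0 ≤ c v * u (Q v) := fun v hv =>
        mul_nonneg (hc v hv) (hu1 _ (hQv v hv))
      have hsum0 : ∑ v ∈ t, c v * u (Q v) = 0 := by
        rw [← hux, map_sum, map_sum]
        exact Finset.sum_congr rfl fun v _ => by rw [map_smul, map_smul, smul_eq_mul]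
      have hz := (Finset.sum_eq_zero_iff_of_nonneg hterms).mp hsum0
      refine (isCone_coneHull _).sum_mem _ _ fun v hv => ?_
      rcases eq_or_ne (c v) 0 with hcv | hcv
      · rw [hcv, zero_smul]; exact zero_mem_coneHull _
      rcases eq_or_ne v 0 with rfl | hv0
      · rw [smul_zero]; exact zero_mem_coneHull _
      have huQv : u (Q v) = 0 := by
        rcases mul_eq_zero.mp (hz v hv) with h | h
        · exact absurd h hcv
        · exact h
      have hQvj : Q v ∈ τ i ∩ τ j := by
        rw [← hu2]
        exact ⟨hQv v hv, huQv⟩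
      obtain ⟨ρ, hρ, hvρ⟩ := hts hv
      have hρΔ : ρ ∈ Δ := hρ.1.1
      have hray : ρ ⊆ rayOf v := by
        refine subset_rayOf_of_finrank_one (hΔcone ρ hρΔ) (hΔsc ρ hρΔ) hρ.1.2 hvρ hv0
      have hρj : ρ ∈ R j := by
        refine ⟨hρ.1, ?_⟩
        rintro _ ⟨y, hyρ, rfl⟩
        obtain ⟨e, he, rfl⟩ := hray hyρ
        rw [map_smul]
        exact (hΔtcone _ (hτΔt j)).2.2 e he _ hQvj.2
      refine (isCone_coneHull _).2.2 _ (hc v hv) _ ?_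
      exact subset_coneHull _ ⟨ρ, hρj, hvρ⟩
    have hE : σ i ∩ σ j = {x | x ∈ σ i ∧ u (Q x) = 0} := by
      apply le_antisymm
      · rintro x ⟨hxi, hxj⟩
        refine ⟨hxi, ?_⟩
        have : Q x ∈ τ i ∩ τ j := ⟨hQσ i ⟨x, hxi, rfl⟩, hQσ j ⟨x, hxj, rfl⟩⟩
        rw [← hu2] at this
        exact this.2
      · rintro x ⟨hxi, hxu⟩
        exact ⟨hxi, hsub2 x hxi hxu⟩
    refine ⟨isCone_inter (hσcone i) (hσcone j), Set.inter_subset_left, ?_⟩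
    intro x hx y hy hxy
    have hx0 : 0 ≤ u (Q x) := hu1 _ (hQσ i ⟨x, hx, rfl⟩)
    have hy0 : 0 ≤ u (Q y) := hu1 _ (hQσ i ⟨y, hy, rfl⟩)
    have hxy0 : u (Q x) + u (Q y) = 0 := by
      have := (hE ▸ hxy).2
      rw [map_add, map_add] at this
      exact this
    constructor
    · rw [hE]; exact ⟨hx, by linarith⟩
    · rw [hE]; exact ⟨hy, by linarith⟩
  -- cones of Δ are generated by their rays
  have hΔrays : ∀ σ' ∈ Δ, σ' ⊆ coneHull (⋃₀ {ρ | IsRay Δ ρ ∧ ρ ⊆ σ'}) := by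
    intro σ' hσ'
    obtain ⟨s, hs⟩ := hΔrat σ' hσ'
    have hs' : σ' = coneHull (↑(s.image toR) : Set (Fin n → ℝ)) := by
      rw [hs, Finset.coe_image]
    have hsc : IsStrictlyConvexCone (coneHull (↑(s.image toR) : Set (Fin n → ℝ))) := by
      rw [← hs']; exact hΔsc σ' hσ'
    have hmink := minkowski (s.image toR) hsc
    rw [← hs'] at hmink
    refine hmink.trans (coneHull_mono (Set.sUnion_mono ?_))
    rintro ρ ⟨hρface, v, hv0, rfl⟩
    refine ⟨⟨hΔface σ' hσ' _ hρface, finrank_span_rayOf hv0⟩, hρface.2.1⟩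
  -- key maximality: σ i ⊆ σ j implies τ i = τ j
  have hkey : ∀ i j, σ i ⊆ σ j → τ i = τ j := by
    intro i j hij
    by_contra hne
    have hRsub : R i ⊆ R j := by
      rintro ρ ⟨hray, hQρ⟩
      refine ⟨hray, ?_⟩
      have hρσi : ρ ⊆ σ i := by
        rw [hσR]
        exact (Set.subset_sUnion_of_mem (show ρ ∈ R i from ⟨hray, hQρ⟩)).trans (subset_coneHull _)
      exact (Set.image_mono (f := Q) (hρσi.trans hij)).trans (hQσ j)
    have hmapsj : ∀ σ' ∈ Δ, Q '' σ' ⊆ τ i → Q '' σ' ⊆ τ j := by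
      intro σ' hσ' hQi
      have h1 : σ' ⊆ coneHull (⋃₀ {ρ | IsRay Δ ρ ∧ ρ ⊆ σ'}) := hΔrays σ' hσ'
      refine (Set.image_mono (f := Q) h1).trans ?_
      refine (image_coneHull_subset Q _).trans ?_
      refine coneHull_subset (hΔtcone _ (hτΔt j)) ?_
      rintro _ ⟨y, hy, rfl⟩
      obtain ⟨ρ, ⟨hρray, hρsub⟩, hyρ⟩ := hy
      have hρRi : ρ ∈ R i := ⟨hρray, (Set.image_mono (f := Q) hρsub).trans hQi⟩
      exact (hRsub hρRi).2 ⟨y, hyρ, rfl⟩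
    set Δ' := Δt \ {τ i} with hΔ'
    have hfan' : IsFan Δ' := by
      refine ⟨⟨⟨hΔt.1.1.1.subset Set.diff_subset,
        fun σ' hσ' => hΔt.1.1.2 σ' hσ'.1⟩, ?_, ?_⟩, fun σ' hσ' => hΔt.2 σ' hσ'.1⟩
      · intro σ' hσ' F hF
        refine ⟨hΔt.1.2.1 σ' hσ'.1 F hF, ?_⟩
        intro hFi
        rw [Set.mem_singleton_iff] at hFi
        apply hσ'.2
        rw [Set.mem_singleton_iff]
        have hsubF : τ i ⊆ σ' := by rw [← hFi]; exact hF.2.1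
        exact ((hτmax i).2 σ' hσ'.1 hsubF).symm
      · intro σ' hσ' σ'' hσ''
        exact hΔt.1.2.2 σ' hσ'.1 σ'' hσ''.1
    have hmap' : IsConeMap P Δ Δ' := by
      intro σ' hσ'
      obtain ⟨τ', hτ', hsub⟩ := hPmap σ' hσ'
      rcases eq_or_ne τ' (τ i) with rfl | hτ'ne
      · refine ⟨τ j, ⟨hτΔt j, ?_⟩, hmapsj σ' hσ' hsub⟩
        rw [Set.mem_singleton_iff]
        exact fun h => hne h.symm
      · exact ⟨τ', ⟨hτ', by rwa [Set.mem_singleton_iff]⟩, hsub⟩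
    obtain ⟨Ft, hFtmap, hFtcomp⟩ := huniv m P Δ' hfan' hmap' hLker
    have hFtid : Ft = LinearMap.id := by
      apply LinearMap.ext
      intro x
      obtain ⟨y, rfl⟩ := hPsurj x
      exact (LinearMap.congr_fun hFtcomp y).symm
    obtain ⟨τ', hτ'mem, hsubτ'⟩ := hFtmap (τ i) (hτΔt i)
    rw [hFtid, extR_id] at hsubτ'
    simp only [LinearMap.id_coe, Set.image_id] at hsubτ'
    have : τ i = τ' := (hτmax i).2 τ' hτ'mem.1 hsubτ'
    exact hτ'mem.2 (by rw [Set.mem_singleton_iff, ← this])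
  have hkey2 : ∀ i j, σ i ⊆ σ j → σ i = σ j := by
    intro i j hij
    have h := hkey i j hij
    rw [hσ i, hσ j, h]
  -- the quasifan of all faces
  set Sig : Set (Set (Fin n → ℝ)) := ⋃ i : Fin r, {F | IsFaceOf F (σ i)} with hSig
  have hmemSig : ∀ F, F ∈ Sig ↔ ∃ i, IsFaceOf F (σ i) := by
    intro F
    simp [hSig]
  have hσSig : ∀ i, σ i ∈ Sig := fun i =>
    (hmemSig _).mpr ⟨i, isFaceOf_refl (hσcone i)⟩
  refine ⟨⟨Sig, ⟨⟨?_, ?_⟩, ?_, ?_⟩, ?_⟩, hface⟩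
  · -- finiteness
    refine Set.finite_iUnion fun i => ?_
    have hsub : {F | IsFaceOf F (σ i)} ⊆
        (fun T : Finset (Fin n → ℝ) => coneHull (↑T : Set (Fin n → ℝ))) ''
          {T | T ⊆ (G i).image toR} := by
      intro F hF
      have hFeq : F = coneHull (↑(((G i).image toR).filter fun v => v ∈ F) :
          Set (Fin n → ℝ)) := by
        have h1 : σ i = coneHull (↑((G i).image toR) : Set (Fin n → ℝ)) := by
          rw [hσG i, Finset.coe_image]
        exact (h1 ▸ hF : IsFaceOf F (coneHull _)).eq_coneHull_filter
      exact ⟨_, Finset.filter_subset _ _, hFeq.symm⟩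
    refine Set.Finite.subset (Set.Finite.image _ ?_) hsub
    have : {T : Finset (Fin n → ℝ) | T ⊆ (G i).image toR} =
        ↑((G i).image toR).powerset := by
      ext T
      rw [Finset.mem_coe, Finset.mem_powerset]
      exact Iff.rfl
    rw [this]
    exact ((G i).image toR).powerset.finite_toSet
  · -- rationality
    intro F hF
    obtain ⟨i, hFi⟩ := (hmemSig F).mp hF
    have h1 : σ i = coneHull (↑((G i).image toR) : Set (Fin n → ℝ)) := by
      rw [hσG i, Finset.coe_image]
    have hFeq := (h1 ▸ hFi : IsFaceOf F (coneHull _)).eq_coneHull_filter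
    refine ⟨(G i).filter fun v => toR v ∈ F, ?_⟩
    conv_lhs => rw [hFeq, Finset.filter_image]
    rw [Finset.coe_image]
  · -- face closure
    intro σ' hσ' F hF
    obtain ⟨i, hi⟩ := (hmemSig σ').mp hσ'
    exact (hmemSig F).mpr ⟨i, hF.trans hi⟩
  · -- intersections are faces
    intro F hF F' hF'
    obtain ⟨i, hFi⟩ := (hmemSig F).mp hF
    obtain ⟨j, hFj⟩ := (hmemSig F').mp hF'
    have hD : IsFaceOf (σ i ∩ σ j) (σ i) := hface i j
    have hD' : IsFaceOf (σ i ∩ σ j) (σ j) := by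
      have := hface j i
      rwa [Set.inter_comm] at this
    set D := σ i ∩ σ j with hDdef
    have hFF' : F ∩ F' ⊆ D := fun x hx => ⟨hFi.2.1 hx.1, hFj.2.1 hx.2⟩
    have h3 : IsFaceOf (F ∩ D) D := (hFi.inter hD).of_subset Set.inter_subset_right hD.2.1
    have h4 : IsFaceOf (F' ∩ D) D := (hFj.inter hD').of_subset Set.inter_subset_right hD'.2.1
    have h5 : IsFaceOf ((F ∩ D) ∩ (F' ∩ D)) D := h3.inter h4
    have heq : (F ∩ D) ∩ (F' ∩ D) = F ∩ F' := by
      ext x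
      constructor
      · rintro ⟨⟨h1, _⟩, ⟨h2, _⟩⟩; exact ⟨h1, h2⟩
      · intro h; exact ⟨⟨h.1, hFF' h⟩, ⟨h.2, hFF' h⟩⟩
    rw [heq] at h5
    exact (h5.trans hD).of_subset Set.inter_subset_left hFi.2.1
  · -- maximal cones
    apply le_antisymm
    · rintro F ⟨hFmem, hFmax⟩
      obtain ⟨i, hFi⟩ := (hmemSig F).mp hFmem
      exact ⟨i, (hFmax (σ i) (hσSig i) hFi.2.1).symm⟩
    · rintro _ ⟨i, rfl⟩
      refine ⟨hσSig i, ?_⟩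
      intro F hFmem hsub
      obtain ⟨j, hFj⟩ := (hmemSig F).mp hFmem
      have hij : σ i ⊆ σ j := hsub.trans hFj.2.1
      have := hkey2 i j hij
      exact le_antisymm hsub (hFj.2.1.trans this.symm.subset)
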